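/- With A, V_k, and the Krylov subspace V_k^s = K_k(AᵀA, Aᵀb) as below, the sine of the largest canonical angle satisfies ‖sin Θ(V_k, V_k^s)‖ = ‖Δ_k‖/√(1 + ‖Δ_k‖²) where Δ_k = D₂ T_{k2} T_{k1}^{-1} D₁^{-1}. -/

import Mathlib

/-!
In the basis of right singular vectors, `AᵀA` acts as `diag(σ²)` and `Aᵀb` has coordinates
`σᵢdᵢ`, so the Krylov matrix is `V [D₁T₁; D₂T₂]`. Since `D₁T₁` is invertible (a Vandermonde matrix
with distinct nodes, scaled), its column space also contains `Y = V [I; Δ]`. Writing `Y = W C` for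
the orthonormal basis `W`, one gets `CᵀC = YᵀY = I + ΔᵀΔ` and `(V_k^⊥)ᵀ W C = Δ`. Hence for
`x = C y`, `‖(V_k^⊥)ᵀ W x‖ / ‖x‖ = t / √(1 + t²)` with `t = ‖Δ y‖ / ‖y‖`, and maximising this
increasing function of `t` gives the formula.
-/

open Matrix

/-- Spectral (operator 2-) norm of a real matrix. -/
noncomputable def specNorm {m n : ℕ} (M : Matrix (Fin m) (Fin n) ℝ) : ℝ :=
  ‖LinearMap.toContinuousLinearMap (Matrix.toEuclideanLin M)‖

def Matrix.rectDiagonal {n : ℕ} {R : Type*} [Zero R] (m : ℕ) (σ : Fin n → R) :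
    Matrix (Fin m) (Fin n) R :=
  of fun i j => if (i : ℕ) = j then σ j else 0

namespace Matrix

section CommSemiring

variable {R : Type*} [CommSemiring R]

theorem rectDiagonal_transpose_mulVec {m n : ℕ} (hmn : n ≤ m) (σ : Fin n → R)
    (c : Fin m → R) :
    (rectDiagonal m σ)ᵀ *ᵥ c = fun j => σ j * c (Fin.castLE hmn j) := by
  funext j
  have hij (i : Fin m) : ((i : ℕ) = j) ↔ i = Fin.castLE hmn j := by simp [Fin.ext_iff]
  simp [rectDiagonal, mulVec, dotProduct, hij]

theorem rectDiagonal_transpose_mul_self {m n : ℕ} (hmn : n ≤ m) (σ : Fin n → R) :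
    (rectDiagonal m σ)ᵀ * rectDiagonal m σ = diagonal fun i => σ i ^ 2 := by
  ext i j
  rw [← col_apply ((rectDiagonal m σ)ᵀ * rectDiagonal m σ), ← mulVec_single_one,
    ← mulVec_mulVec, mulVec_single_one, rectDiagonal_transpose_mulVec hmn]
  simp only [rectDiagonal, col_apply, of_apply, Fin.val_castLE, Fin.val_inj, diagonal_apply]
  split_ifs with h <;> simp [h, sq]

theorem transpose_mul_self_mul_eq_mul_diagonal {m n : ℕ} (hmn : n ≤ m)
    {A : Matrix (Fin m) (Fin n) R} {U : Matrix (Fin m) (Fin m) R} {V : Matrix (Fin n) (Fin n) R}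
    {σ : Fin n → R} (hU : Uᵀ * U = 1) (hV : Vᵀ * V = 1) (hA : A = U * rectDiagonal m σ * Vᵀ) :
    Aᵀ * A * V = V * diagonal fun i => σ i ^ 2 := by
  rw [hA]
  simp only [transpose_mul, transpose_transpose, Matrix.mul_assoc]
  rw [hV, Matrix.mul_one, ← Matrix.mul_assoc Uᵀ, hU, Matrix.one_mul,
    rectDiagonal_transpose_mul_self hmn]

theorem pow_mulVec_of_mul_eq_mul_diagonal {n p : Type*} [Fintype n] [DecidableEq n] [Fintype p]
    [DecidableEq p] {X : Matrix n n R} {V : Matrix n p R} {μ : p → R}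
    (h : X * V = V * diagonal μ) (j : ℕ) (x : p → R) :
    X ^ j *ᵥ (V *ᵥ x) = V *ᵥ fun i => μ i ^ j * x i := by
  have hpow : X ^ j * V = V * diagonal fun i => μ i ^ j := by
    induction j with
    | zero => simp
    | succ j ih =>
      rw [pow_succ, Matrix.mul_assoc, h, ← Matrix.mul_assoc, ih, Matrix.mul_assoc,
        diagonal_mul_diagonal]
      simp [pow_succ]
  rw [mulVec_mulVec, hpow, ← mulVec_mulVec]
  congr 1
  ext i
  rw [mulVec_diagonal]

theorem pow_transpose_mul_self_mulVec_eq_of_svd {m n : ℕ} (hmn : n ≤ m)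
    {A : Matrix (Fin m) (Fin n) R} {U : Matrix (Fin m) (Fin m) R} {V : Matrix (Fin n) (Fin n) R}
    {σ : Fin n → R} (hU : Uᵀ * U = 1) (hV : Vᵀ * V = 1) (hA : A = U * rectDiagonal m σ * Vᵀ)
    (b : Fin m → R) (j : ℕ) :
    (Aᵀ * A) ^ j *ᵥ (Aᵀ *ᵥ b) =
      V *ᵥ fun i => (σ i ^ 2) ^ j * (σ i * (Uᵀ *ᵥ b) (Fin.castLE hmn i)) := by
  have hAb : Aᵀ *ᵥ b = V *ᵥ fun i => σ i * (Uᵀ *ᵥ b) (Fin.castLE hmn i) := by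
    rw [hA, transpose_mul, transpose_mul, transpose_transpose, ← mulVec_mulVec,
      ← mulVec_mulVec, rectDiagonal_transpose_mulVec hmn]
  rw [hAb,
    pow_mulVec_of_mul_eq_mul_diagonal (transpose_mul_self_mul_eq_mul_diagonal hmn hU hV hA)]

theorem mul_transpose_mul_of_range_le {m n p : Type*} [Fintype m] [Fintype n] [Fintype p]
    [DecidableEq n] [DecidableEq p] {W : Matrix m n R} {Y : Matrix m p R} (hW : Wᵀ * W = 1)
    (hY : LinearMap.range Y.mulVecLin ≤ LinearMap.range W.mulVecLin) :
    W * (Wᵀ * Y) = Y := by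
  choose X hX using fun j => hY ⟨Pi.single j 1, rfl⟩
  obtain rfl : Y = W * (of X)ᵀ := ext_of_mulVec_single fun j => by
    have hXj := (hX j).symm
    simp only [mulVecLin_apply, mulVec_single_one] at hXj
    rw [← mulVec_mulVec, mulVec_single_one, mulVec_single_one]
    exact hXj
  rw [← Matrix.mul_assoc Wᵀ, hW, Matrix.one_mul]

theorem mul_eq_castAdd_add_natAdd {l n : Type*} {k r : ℕ} (X : Matrix l (Fin (k + r)) R)
    (Y : Matrix (Fin (k + r)) n R) :
    X * Y = X.submatrix id (Fin.castAdd r) * Y.submatrix (Fin.castAdd r) id +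
      X.submatrix id (Fin.natAdd k) * Y.submatrix (Fin.natAdd k) id := by
  ext
  simp [mul_apply, Fin.sum_univ_add]

end CommSemiring

theorem det_diagonal_mul_vandermonde_ne_zero {R : Type*} [CommRing R] [IsDomain R] {n : ℕ}
    {c v : Fin n → R} (hc : ∀ i, c i ≠ 0) (hv : Function.Injective v) :
    (diagonal c * vandermonde v).det ≠ 0 := by
  rw [det_mul, det_diagonal]
  exact mul_ne_zero (Finset.prod_ne_zero_iff.2 fun i _ => hc i) (det_vandermonde_ne_zero_iff.2 hv)

end Matrix

namespace ContinuousLinearMap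

variable {E F G : Type*} [NormedAddCommGroup E] [NormedSpace ℝ E]
  [NormedAddCommGroup F] [NormedSpace ℝ F] [NormedAddCommGroup G] [NormedSpace ℝ G]

theorem opNorm_le_iff_sq {f : E →L[ℝ] F} {c : ℝ} (hc : 0 ≤ c) :
    ‖f‖ ≤ c ↔ ∀ x, ‖f x‖ ^ 2 ≤ c ^ 2 * ‖x‖ ^ 2 := by
  rw [opNorm_le_iff hc]
  refine forall_congr' fun x => ?_
  rw [← mul_pow, sq_le_sq₀ (norm_nonneg _) (by positivity)]

theorem opNorm_eq_div_sqrt_of_norm_sq_eq {S : E →L[ℝ] F} {C : G →L[ℝ] E} {Δ : G →L[ℝ] F}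
    (hC : Function.Surjective C) (hSC : ∀ y, S (C y) = Δ y)
    (hnorm : ∀ y, ‖C y‖ ^ 2 = ‖y‖ ^ 2 + ‖Δ y‖ ^ 2) :
    ‖S‖ = ‖Δ‖ / √(1 + ‖Δ‖ ^ 2) := by
  have hS_le {c : ℝ} (hc : 0 ≤ c) :
      ‖S‖ ≤ c ↔ ∀ y, ‖Δ y‖ ^ 2 ≤ c ^ 2 * (‖y‖ ^ 2 + ‖Δ y‖ ^ 2) := by
    simp only [opNorm_le_iff_sq hc, hC.forall, hSC, hnorm]
  set a := ‖Δ‖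
  set s := ‖S‖
  have ha : ∀ y, ‖Δ y‖ ^ 2 ≤ a ^ 2 * ‖y‖ ^ 2 := (opNorm_le_iff_sq (norm_nonneg _)).1 le_rfl
  have hs : ∀ y, ‖Δ y‖ ^ 2 ≤ s ^ 2 * (‖y‖ ^ 2 + ‖Δ y‖ ^ 2) := (hS_le (norm_nonneg _)).1 le_rfl
  have hq : √(1 + a ^ 2) ^ 2 = 1 + a ^ 2 := Real.sq_sqrt (by positivity)
  have upper : s ≤ a / √(1 + a ^ 2) := by
    refine (hS_le (by positivity)).2 fun y => ?_
    rw [div_pow, hq, div_mul_eq_mul_div, le_div_iff₀ (by positivity)]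
    nlinarith [ha y]
  have hs1 : s ^ 2 < 1 := by
    calc s ^ 2 ≤ (a / √(1 + a ^ 2)) ^ 2 := pow_le_pow_left₀ (norm_nonneg _) upper 2
      _ = a ^ 2 / (1 + a ^ 2) := by rw [div_pow, hq]
      _ < 1 := (div_lt_one (by positivity)).2 (by linarith)
  -- the inverse of `t ↦ t / √(1 + t²)` is `s ↦ s / √(1 - s²)`
  have lower : a ≤ s / √(1 - s ^ 2) := by
    refine (opNorm_le_iff_sq (by positivity)).2 fun y => ?_
    rw [div_pow, Real.sq_sqrt (by linarith), div_mul_eq_mul_div, le_div_iff₀ (by linarith)]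
    nlinarith [hs y]
  have hsq : a ^ 2 ≤ s ^ 2 * √(1 + a ^ 2) ^ 2 := by
    have h := pow_le_pow_left₀ (norm_nonneg _) lower 2
    rw [div_pow, Real.sq_sqrt (by linarith), le_div_iff₀ (by linarith)] at h
    rw [hq]
    nlinarith
  refine le_antisymm upper ?_
  rw [div_le_iff₀ (by positivity), ← sq_le_sq₀ (norm_nonneg _) (by positivity), mul_pow]
  exact hsq

end ContinuousLinearMap

theorem EuclideanSpace.norm_sq_eq_dotProduct {n : Type*} [Fintype n] (x : EuclideanSpace ℝ n) :
    ‖x‖ ^ 2 = x.ofLp ⬝ᵥ x.ofLp := by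
  rw [← real_inner_self_eq_norm_sq, EuclideanSpace.inner_eq_star_dotProduct]
  simp

theorem Matrix.norm_toEuclideanLin_sq {m n : Type*} [Fintype m] [Fintype n] [DecidableEq n]
    (P : Matrix m n ℝ) (x : EuclideanSpace ℝ n) :
    ‖toEuclideanLin P x‖ ^ 2 = x.ofLp ⬝ᵥ (Pᵀ * P) *ᵥ x.ofLp := by
  rw [EuclideanSpace.norm_sq_eq_dotProduct, ofLp_toLpLin, toLin'_apply, ← mulVec_mulVec,
    dotProduct_mulVec, ← mulVec_transpose, dotProduct_comm]

theorem specNorm_eq_div_sqrt_of_mul_eq {k r : ℕ} {S : Matrix (Fin r) (Fin k) ℝ}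
    {C : Matrix (Fin k) (Fin k) ℝ} {Δ : Matrix (Fin r) (Fin k) ℝ} (hSC : S * C = Δ)
    (hC : Cᵀ * C = 1 + Δᵀ * Δ) :
    specNorm S = specNorm Δ / √(1 + specNorm Δ ^ 2) := by
  have hnorm (y : EuclideanSpace ℝ (Fin k)) :
      ‖toEuclideanLin C y‖ ^ 2 = ‖y‖ ^ 2 + ‖toEuclideanLin Δ y‖ ^ 2 := by
    rw [norm_toEuclideanLin_sq, norm_toEuclideanLin_sq, hC, add_mulVec, one_mulVec,
      dotProduct_add, EuclideanSpace.norm_sq_eq_dotProduct]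
  have hinj : Function.Injective (toEuclideanLin C) := by
    refine (injective_iff_map_eq_zero _).2 fun y hy => ?_
    have h := hnorm y
    rw [hy, norm_zero] at h
    exact norm_eq_zero.1 (by nlinarith [sq_nonneg ‖y‖, sq_nonneg ‖toEuclideanLin Δ y‖])
  refine ContinuousLinearMap.opNorm_eq_div_sqrt_of_norm_sq_eq
    (C := LinearMap.toContinuousLinearMap (toEuclideanLin C))
    (LinearMap.surjective_of_injective hinj) (fun y => ?_) hnorm
  simp [← hSC, toLpLin_mul_same]

theorem specNorm_transpose_mul_eq_of_range_le {n k r : ℕ} {V : Matrix (Fin n) (Fin (k + r)) ℝ}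
    (hV : Vᵀ * V = 1) {N : Matrix (Fin (k + r)) (Fin k) ℝ} {Δ : Matrix (Fin r) (Fin k) ℝ}
    (htop : N.submatrix (Fin.castAdd r) id = 1) (hbot : N.submatrix (Fin.natAdd k) id = Δ)
    {W : Matrix (Fin n) (Fin k) ℝ} (hW : Wᵀ * W = 1)
    (hNW : LinearMap.range (V * N).mulVecLin ≤ LinearMap.range W.mulVecLin) :
    specNorm ((V.submatrix id (Fin.natAdd k))ᵀ * W) =
      specNorm Δ / √(1 + specNorm Δ ^ 2) := by
  have hWY := mul_transpose_mul_of_range_le hW hNW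
  have hYY : (V * N)ᵀ * (V * N) = 1 + Δᵀ * Δ := by
    rw [transpose_mul, Matrix.mul_assoc, ← Matrix.mul_assoc Vᵀ, hV, Matrix.one_mul,
      mul_eq_castAdd_add_natAdd, ← transpose_submatrix, ← transpose_submatrix, htop, hbot,
      transpose_one, Matrix.one_mul]
  have hVY : (V.submatrix id (Fin.natAdd k))ᵀ * (V * N) = Δ := by
    have h := submatrix_mul Vᵀ (V * N) (Fin.natAdd k) id id Function.bijective_id
    rw [← Matrix.mul_assoc, hV, Matrix.one_mul, hbot, submatrix_id_id] at h
    rw [h, transpose_submatrix]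
  refine specNorm_eq_div_sqrt_of_mul_eq (C := Wᵀ * (V * N)) ?_ ?_
  · rw [Matrix.mul_assoc, hWY, hVY]
  · rw [transpose_mul, transpose_transpose, Matrix.mul_assoc, hWY, hYY]

theorem sin_theta_krylov_general (m k r : ℕ) (hmn : k + r ≤ m)
    (A : Matrix (Fin m) (Fin (k + r)) ℝ)
    (U : Matrix (Fin m) (Fin m) ℝ) (hU : U.transpose * U = 1)
    (V : Matrix (Fin (k + r)) (Fin (k + r)) ℝ)
    (hV : V.transpose * V = 1)
    (σ : Fin (k + r) → ℝ) (hσpos : ∀ i, 0 < σ i) (hσanti : StrictAnti σ)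
    (hA : A = U * (Matrix.of fun (i : Fin m) (j : Fin (k + r)) =>
      if (i : ℕ) = (j : ℕ) then σ j else 0) * V.transpose)
    (b : Fin m → ℝ)
    (d : Fin (k + r) → ℝ) (hd : d = fun i => ∑ row, U row (Fin.castLE hmn i) * b row)
    (hb : ∀ i, d i ≠ 0)
    (D₁ : Matrix (Fin k) (Fin k) ℝ)
    (hD₁ : D₁ = Matrix.diagonal fun j => σ (Fin.castAdd r j) * d (Fin.castAdd r j))
    (D₂ : Matrix (Fin r) (Fin r) ℝ)
    (hD₂ : D₂ = Matrix.diagonal fun i => σ (Fin.natAdd k i) * d (Fin.natAdd k i))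
    (T₁ : Matrix (Fin k) (Fin k) ℝ)
    (hT₁ : T₁ = Matrix.of fun i (j : Fin k) => (σ (Fin.castAdd r i) ^ 2) ^ (j : ℕ))
    (T₂ : Matrix (Fin r) (Fin k) ℝ)
    (hT₂ : T₂ = Matrix.of fun i (j : Fin k) => (σ (Fin.natAdd k i) ^ 2) ^ (j : ℕ))
    (Δ : Matrix (Fin r) (Fin k) ℝ) (hΔ : Δ = D₂ * T₂ * T₁⁻¹ * D₁⁻¹)
    (Vkperp : Matrix (Fin (k + r)) (Fin r) ℝ)
    (hVkperp : Vkperp = Matrix.of fun i j => V i (Fin.natAdd k j))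
    (W : Matrix (Fin (k + r)) (Fin k) ℝ) (hW : W.transpose * W = 1)
    (hWspan : Submodule.span ℝ (Set.range fun j : Fin k => W.transpose j) =
      Submodule.span ℝ (Set.range fun i : Fin k =>
        ((A.transpose * A) ^ (i : ℕ)) *ᵥ (A.transpose *ᵥ b))) :
    specNorm (Vkperp.transpose * W) = specNorm Δ / Real.sqrt (1 + specNorm Δ ^ 2) := by
  set M : Matrix (Fin (k + r)) (Fin k) ℝ := of fun i j => (σ i ^ 2) ^ (j : ℕ) * (σ i * d i)
  have hKrylov : LinearMap.range W.mulVecLin = LinearMap.range (V * M).mulVecLin := by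
    have hcols : (V * M).col = fun j : Fin k => (Aᵀ * A) ^ (j : ℕ) *ᵥ (Aᵀ *ᵥ b) := by
      ext j i
      rw [pow_transpose_mul_self_mulVec_eq_of_svd hmn hU hV hA]
      subst hd
      rfl
    rw [range_mulVecLin, range_mulVecLin, hcols]
    exact hWspan
  have hM {p : ℕ} (f : Fin p → Fin (k + r)) : M.submatrix f id =
      diagonal (fun i => σ (f i) * d (f i)) * of fun i (j : Fin k) => (σ (f i) ^ 2) ^ (j : ℕ) := by
    ext i j
    simp only [submatrix_apply, id_eq, of_apply, diagonal_mul, M]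
    ring
  have hσinj : Function.Injective fun i : Fin k => σ (Fin.castAdd r i) ^ 2 := fun i j h =>
    Fin.castAdd_injective _ _ (hσanti.injective ((sq_eq_sq₀ (hσpos _).le (hσpos _).le).1 h))
  have hDT : IsUnit (D₁ * T₁).det := by
    rw [hD₁, hT₁]
    exact isUnit_iff_ne_zero.2 <| det_diagonal_mul_vandermonde_ne_zero
      (fun i => mul_ne_zero (hσpos _).ne' (hb _)) hσinj
  rw [hVkperp, hΔ, Matrix.mul_assoc _ T₁⁻¹, ← Matrix.mul_inv_rev]
  refine specNorm_transpose_mul_eq_of_range_le hV (N := M * (D₁ * T₁)⁻¹) ?_ ?_ hW ?_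
  · rw [submatrix_mul _ _ _ id _ Function.bijective_id, submatrix_id_id, hM, ← hD₁, ← hT₁,
      mul_nonsing_inv _ hDT]
  · rw [submatrix_mul _ _ _ id _ Function.bijective_id, submatrix_id_id, hM, ← hD₂, ← hT₂]
  · rw [hKrylov, ← Matrix.mul_assoc, mulVecLin_mul]
    exact LinearMap.range_comp_le_range _ _

/-- with `A = U [Σ;0] Vᵀ` (`n = k + r`, distinct positive singular values,
`u_iᵀ b ≠ 0` for all `i`), `V_k` the span of the first `k` right singular vectors and
`V_k^s = K_k(AᵀA, Aᵀb)`, the sine of the largest canonical angle satisfies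
`‖sin Θ(V_k, V_k^s)‖ = ‖Δ_k‖/√(1 + ‖Δ_k‖²)` where `Δ_k = D₂ T_{k2} T_{k1}⁻¹ D₁⁻¹`:
for any matrix `W` with orthonormal columns spanning the Krylov subspace,
`‖(V_k^⊥)ᵀ W‖ = ‖Δ‖/√(1 + ‖Δ‖²)`. -/
theorem sin_theta_krylov (m k r : ℕ) (hmn : k + r ≤ m)
    (A : Matrix (Fin m) (Fin (k + r)) ℝ)
    (U : Matrix (Fin m) (Fin m) ℝ) (hU : U.transpose * U = 1) (hU' : U * U.transpose = 1)
    (V : Matrix (Fin (k + r)) (Fin (k + r)) ℝ)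
    (hV : V.transpose * V = 1) (hV' : V * V.transpose = 1)
    (σ : Fin (k + r) → ℝ) (hσpos : ∀ i, 0 < σ i) (hσanti : StrictAnti σ)
    (hA : A = U * (Matrix.of fun (i : Fin m) (j : Fin (k + r)) =>
      if (i : ℕ) = (j : ℕ) then σ j else 0) * V.transpose)
    (b : Fin m → ℝ)
    (d : Fin (k + r) → ℝ) (hd : d = fun i => ∑ row, U row (Fin.castLE hmn i) * b row)
    (hb : ∀ i, d i ≠ 0)
    (D₁ : Matrix (Fin k) (Fin k) ℝ)
    (hD₁ : D₁ = Matrix.diagonal fun j => σ (Fin.castAdd r j) * d (Fin.castAdd r j))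
    (D₂ : Matrix (Fin r) (Fin r) ℝ)
    (hD₂ : D₂ = Matrix.diagonal fun i => σ (Fin.natAdd k i) * d (Fin.natAdd k i))
    (T₁ : Matrix (Fin k) (Fin k) ℝ)
    (hT₁ : T₁ = Matrix.of fun i (j : Fin k) => (σ (Fin.castAdd r i) ^ 2) ^ (j : ℕ))
    (T₂ : Matrix (Fin r) (Fin k) ℝ)
    (hT₂ : T₂ = Matrix.of fun i (j : Fin k) => (σ (Fin.natAdd k i) ^ 2) ^ (j : ℕ))
    (Δ : Matrix (Fin r) (Fin k) ℝ) (hΔ : Δ = D₂ * T₂ * T₁⁻¹ * D₁⁻¹)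
    (Vkperp : Matrix (Fin (k + r)) (Fin r) ℝ)
    (hVkperp : Vkperp = Matrix.of fun i j => V i (Fin.natAdd k j))
    (W : Matrix (Fin (k + r)) (Fin k) ℝ) (hW : W.transpose * W = 1)
    (hWspan : Submodule.span ℝ (Set.range fun j : Fin k => W.transpose j) =
      Submodule.span ℝ (Set.range fun i : Fin k =>
        ((A.transpose * A) ^ (i : ℕ)) *ᵥ (A.transpose *ᵥ b))) :
    specNorm (Vkperp.transpose * W) = specNorm Δ / Real.sqrt (1 + specNorm Δ ^ 2) :=
  sin_theta_krylov_general m k r hmn A U hU V hV σ hσpos hσanti hA b d hd hb D₁ hD₁ D₂ hD₂ T₁ hT₁ T₂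
    hT₂ Δ hΔ Vkperp hVkperp W hW hWspan
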